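/- arXiv:1001.3971 — 5 statements merged into one kernel-verified Lean document; each statement's English description precedes it below -/
import Mathlib

section
/- Equality condition in the multi-parameter Braunstein–Caves inequality: Let ρ be a density matrix on ℂ^d, let D_1,…,D_p be Hermitian d×d complex matrices and λ^1,…,λ^p Hermitian d×d complex matrices with D_j = (1/2)(ρ λ^j + λ^j ρ) for every j. Let (M_m)_{m∈Ω} be a POVM with finite outcome set Ω, and define F ∈ ℝ^{p×p} by F_{jk} = Σ over m ∈ Ω with tr(ρ M_m) ≠ 0 of Re tr(D_j M_m) · Re tr(D_k M_m) / Re tr(ρ M_m), and H ∈ ℝ^{p×p} by H_{jk} = Re tr(λ^j ρ λ^k). Then F = H (as matrices) if and only if there exist real numbers ξ_m^j (m ∈ Ω, 1 ≤ j ≤ p) such that M_m^{1/2} λ^j ρ^{1/2} = ξ_m^j M_m^{1/2} ρ^{1/2} for all m and j. -/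
/-!
Put `V_m = M_m^{1/2} ρ^{1/2}` and `U_m^j = M_m^{1/2} λ^j ρ^{1/2}`, and use the Frobenius inner
product `⟪A, B⟫ = tr (Aᴴ B)`. Then `tr (ρ M_m) = ‖V_m‖²`, `Re tr (D_j M_m) = Re ⟪V_m, U_m^j⟫` and,
because the `M_m` sum to `1`, `H_jk = ∑_m Re ⟪U_m^j, U_m^k⟫`. Hence
`H_jj - F_jj = ∑_m ‖U_m^j - c_m^j V_m‖²` with `c_m^j = Re ⟪V_m, U_m^j⟫ / ‖V_m‖²`, which vanishes
exactly when every `U_m^j` is a real multiple of `V_m`; conversely, for `U_m^j = ξ_m^j V_m` both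
`F_jk` and `H_jk` equal `∑_m ξ_m^j ξ_m^k ‖V_m‖²`.
-/

open scoped BigOperators ComplexOrder

noncomputable section

def Matrix.PosSemidef.sqrt {n 𝕜 : Type*} [Fintype n] [RCLike 𝕜] [DecidableEq n]
    {A : Matrix n n 𝕜} (hA : A.PosSemidef) : Matrix n n 𝕜 :=
  (hA.1.eigenvectorUnitary : Matrix n n 𝕜) *
    Matrix.diagonal (fun i => ((Real.sqrt (hA.1.eigenvalues i) : ℝ) : 𝕜)) *
    (star hA.1.eigenvectorUnitary : Matrix n n 𝕜)

open RCLike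

section InnerProductSpace

variable {𝕜 E : Type*} [RCLike 𝕜] [NormedAddCommGroup E] [InnerProductSpace 𝕜 E]

local notation "⟪" x ", " y "⟫" => inner 𝕜 x y

theorem norm_sub_re_inner_div_smul_sq (v u : E) :
    ‖u - ((re ⟪v, u⟫ / ‖v‖ ^ 2 : ℝ) : 𝕜) • v‖ ^ 2 =
      ‖u‖ ^ 2 - re ⟪v, u⟫ * re ⟪v, u⟫ / ‖v‖ ^ 2 := by
  rcases eq_or_ne v 0 with rfl | hv
  · simp
  have hv' : ‖v‖ ^ 2 ≠ 0 := by positivity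
  rw [@norm_sub_sq 𝕜, inner_smul_real_right, norm_smul, inner_re_symm]
  simp only [norm_algebraMap', Real.norm_eq_abs, real_smul_eq_coe_mul, re_ofReal_mul, mul_pow,
    sq_abs]
  field_simp
  ring

theorem sum_re_inner_mul_div_eq_sum_re_inner_iff {Ω ι : Type*} [Fintype Ω]
    (v : Ω → E) (u : Ω → ι → E) :
    (∀ j k, ∑ m, re ⟪v m, u m j⟫ * re ⟪v m, u m k⟫ / ‖v m‖ ^ 2 = ∑ m, re ⟪u m j, u m k⟫) ↔
      ∃ ξ : Ω → ι → ℝ, ∀ m j, u m j = (ξ m j : 𝕜) • v m := by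
  constructor
  · intro h
    refine ⟨fun m j => re ⟪v m, u m j⟫ / ‖v m‖ ^ 2, fun m j => ?_⟩
    have hsum : ∑ m, ‖u m j - ((re ⟪v m, u m j⟫ / ‖v m‖ ^ 2 : ℝ) : 𝕜) • v m‖ ^ 2 = 0 := by
      simp only [norm_sub_re_inner_div_smul_sq, Finset.sum_sub_distrib, h j j]
      simp only [@norm_sq_eq_re_inner 𝕜 E, sub_self]
    have hm := (Finset.sum_eq_zero_iff_of_nonneg fun m _ => by positivity).mp hsum m
      (Finset.mem_univ m)
    rwa [sq_eq_zero_iff, norm_eq_zero, sub_eq_zero] at hm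
  · rintro ⟨ξ, hξ⟩ j k
    refine Finset.sum_congr rfl fun m _ => ?_
    rcases eq_or_ne (v m) 0 with hv | hv
    · simp [hξ, hv]
    simp only [hξ, inner_smul_real_left, inner_smul_real_right, real_smul_eq_coe_mul,
      re_ofReal_mul, ← @norm_sq_eq_re_inner 𝕜]
    field_simp

end InnerProductSpace

namespace Matrix

variable {n 𝕜 : Type*} [Fintype n] [RCLike 𝕜]

section Sqrt

variable [DecidableEq n] {A : Matrix n n 𝕜} (hA : A.PosSemidef)

theorem PosSemidef.isHermitian_sqrt : hA.sqrt.IsHermitian := by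
  simp [IsHermitian, PosSemidef.sqrt, conjTranspose_mul, mul_assoc, star_eq_conjTranspose,
    Pi.star_def]

theorem PosSemidef.sqrt_mul_self : hA.sqrt * hA.sqrt = A := by
  conv_rhs => rw [hA.1.spectral_theorem]
  simp only [PosSemidef.sqrt, Unitary.conjStarAlgAut_apply, mul_assoc]
  rw [← mul_assoc (star _), Unitary.coe_star_mul_self, one_mul, ← mul_assoc (diagonal _),
    diagonal_mul_diagonal]
  congr 3
  ext i
  simp [← ofReal_mul, Real.mul_self_sqrt (hA.eigenvalues_nonneg i)]

end Sqrt

theorem IsHermitian.mul_self {A : Matrix n n 𝕜} (hA : A.IsHermitian) : (A * A).IsHermitian := by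
  simpa [hA.eq] using isHermitian_mul_conjTranspose_self A

theorem IsHermitian.re_trace_mul_mul_rev {A B C : Matrix n n 𝕜} (hA : A.IsHermitian)
    (hB : B.IsHermitian) (hC : C.IsHermitian) :
    re (A * B * C).trace = re (C * B * A).trace := by
  rw [← conj_re, ← star_def, ← trace_conjTranspose]
  simp [conjTranspose_mul, hA.eq, hB.eq, hC.eq, mul_assoc]

theorem re_trace_half_smul_add_mul {ρ L M : Matrix n n 𝕜} (hρ : ρ.IsHermitian)
    (hL : L.IsHermitian) (hM : M.IsHermitian) :
    re (((1 / 2 : 𝕜) • (ρ * L + L * ρ)) * M).trace = re (M * L * ρ).trace := by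
  have half : (1 / 2 : 𝕜) = ((1 / 2 : ℝ) : 𝕜) := by push_cast; ring
  rw [smul_mul, add_mul, trace_smul, trace_add, trace_mul_cycle L ρ M, half, smul_eq_mul,
    re_ofReal_mul, map_add, hρ.re_trace_mul_mul_rev hL hM]
  ring

theorem trace_conjTranspose_mul_sandwich {S R : Matrix n n 𝕜} (hS : S.IsHermitian)
    (hR : R.IsHermitian) (A B : Matrix n n 𝕜) :
    ((S * A * R)ᴴ * (S * B * R)).trace = (Aᴴ * (S * S) * B * (R * R)).trace := by
  rw [conjTranspose_mul, conjTranspose_mul, hS.eq, hR.eq, ← trace_mul_cycle]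
  simp only [mul_assoc]

theorem sum_re_trace_mul_div_eq_sum_re_trace_iff [DecidableEq n] {Ω ι : Type*} [Fintype Ω]
    (v : Ω → Matrix n n 𝕜) (u : Ω → ι → Matrix n n 𝕜) :
    (∀ j k, ∑ m, re ((v m)ᴴ * u m j).trace * re ((v m)ᴴ * u m k).trace /
        re ((v m)ᴴ * v m).trace = ∑ m, re ((u m j)ᴴ * u m k).trace) ↔
      ∃ ξ : Ω → ι → ℝ, ∀ m j, u m j = (ξ m j : 𝕜) • v m := by
  -- The inner product weighted by the identity matrix is the Frobenius one, `⟪A, B⟫ = tr (B Aᴴ)`.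
  let := toMatrixNormedAddCommGroup (1 : Matrix n n 𝕜) PosDef.one
  let := toMatrixInnerProductSpace (1 : Matrix n n 𝕜) PosSemidef.one
  have inner_eq (A B : Matrix n n 𝕜) : inner 𝕜 A B = (Aᴴ * B).trace := by
    rw [trace_mul_comm]
    exact congrArg trace (congrArg (· * Aᴴ) (mul_one B))
  simpa only [@norm_sq_eq_re_inner 𝕜, inner_eq] using
    sum_re_inner_mul_div_eq_sum_re_inner_iff (𝕜 := 𝕜) v u

section SquareRoots

variable [DecidableEq n] {ρ R M S : Matrix n n 𝕜} (hR : R.IsHermitian) (hRR : R * R = ρ)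
  (hS : S.IsHermitian) (hSS : S * S = M)
include hR hRR hS hSS

theorem trace_mul_eq_trace_conjTranspose_mul_self :
    (ρ * M).trace = ((S * R)ᴴ * (S * R)).trace := by
  simpa [← hRR, ← hSS, trace_mul_comm (R * R)] using
    (trace_conjTranspose_mul_sandwich hS hR 1 1).symm

theorem re_trace_mul_eq_re_trace_conjTranspose_mul {D L : Matrix n n 𝕜}
    (hL : L.IsHermitian) (hD : D = (1 / 2 : 𝕜) • (ρ * L + L * ρ)) :
    re (D * M).trace = re ((S * R)ᴴ * (S * L * R)).trace := by
  have hρ : ρ.IsHermitian := hRR ▸ hR.mul_self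
  have hM : M.IsHermitian := hSS ▸ hS.mul_self
  calc re (D * M).trace = re (M * L * ρ).trace := hD ▸ re_trace_half_smul_add_mul hρ hL hM
    _ = re ((S * 1 * R)ᴴ * (S * L * R)).trace := by
      rw [trace_conjTranspose_mul_sandwich hS hR, conjTranspose_one, Matrix.one_mul, hSS, hRR]
    _ = re ((S * R)ᴴ * (S * L * R)).trace := by rw [Matrix.mul_one]

end SquareRoots

theorem sum_re_trace_conjTranspose_mul_eq_re_trace [DecidableEq n] {Ω : Type*} [Fintype Ω]
    {ρ R L K : Matrix n n 𝕜} {M S : Ω → Matrix n n 𝕜} (hR : R.IsHermitian) (hRR : R * R = ρ)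
    (hS : ∀ m, (S m).IsHermitian) (hSS : ∀ m, S m * S m = M m) (hMsum : ∑ m, M m = 1)
    (hL : L.IsHermitian) (hK : K.IsHermitian) :
    ∑ m, re ((S m * L * R)ᴴ * (S m * K * R)).trace = re (L * ρ * K).trace := by
  have hρ : ρ.IsHermitian := hRR ▸ hR.mul_self
  simp only [trace_conjTranspose_mul_sandwich (hS _) hR, hSS, hL.eq, ← map_sum, ← trace_sum,
    ← Finset.sum_mul, ← Finset.mul_sum, hMsum, Matrix.mul_one, hRR]
  rw [hL.re_trace_mul_mul_rev hK hρ, trace_mul_cycle]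

end Matrix

open Matrix

theorem braunstein_caves_equality_general {d p : ℕ} {Ω : Type} [Fintype Ω]
    (ρ : Matrix (Fin d) (Fin d) ℂ) (hρ : ρ.PosSemidef)
    (D lam : Fin p → Matrix (Fin d) (Fin d) ℂ)
    (hlam : ∀ j, (lam j).IsHermitian)
    (hSLD : ∀ j, D j = (1 / 2 : ℂ) • (ρ * lam j + lam j * ρ))
    (M : Ω → Matrix (Fin d) (Fin d) ℂ)
    (hM : ∀ m, (M m).PosSemidef) (hMsum : ∑ m, M m = 1)
    (F H : Fin p → Fin p → ℝ)
    (hF : ∀ j k, F j k = ∑ m, if (ρ * M m).trace ≠ 0 then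
        ((D j * M m).trace.re * (D k * M m).trace.re) / ((ρ * M m).trace.re) else 0)
    (hH : ∀ j k, H j k = ((lam j * ρ * lam k).trace).re) :
    (∀ j k, F j k = H j k) ↔
      ∃ ξ : Ω → Fin p → ℝ, ∀ m j,
        (hM m).sqrt * lam j * hρ.sqrt = (ξ m j : ℂ) • ((hM m).sqrt * hρ.sqrt) := by
  set R := hρ.sqrt
  set S := fun m => (hM m).sqrt
  have hR := hρ.isHermitian_sqrt
  have hRR := hρ.sqrt_mul_self
  have hS m := (hM m).isHermitian_sqrt
  have hSS m := (hM m).sqrt_mul_self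
  have hF' j k : F j k = ∑ m, re ((S m * R)ᴴ * (S m * lam j * R)).trace *
      re ((S m * R)ᴴ * (S m * lam k * R)).trace / re ((S m * R)ᴴ * (S m * R)).trace := by
    refine (hF j k).trans (Finset.sum_congr rfl fun m _ => ?_)
    rw [← re_trace_mul_eq_re_trace_conjTranspose_mul hR hRR (hS m) (hSS m) (hlam j) (hSLD j),
      ← re_trace_mul_eq_re_trace_conjTranspose_mul hR hRR (hS m) (hSS m) (hlam k) (hSLD k),
      ← trace_mul_eq_trace_conjTranspose_mul_self hR hRR (hS m) (hSS m)]
    -- The guard is redundant: if `tr (ρ M_m) = 0` the quotient is a division by zero.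
    split_ifs with h
    · rfl
    · simp [not_not.mp h]
  have hH' j k : H j k = ∑ m, re ((S m * lam j * R)ᴴ * (S m * lam k * R)).trace := by
    rw [hH, sum_re_trace_conjTranspose_mul_eq_re_trace hR hRR hS hSS hMsum (hlam j) (hlam k)]
    rfl
  simp only [hF', hH']
  exact sum_re_trace_mul_div_eq_sum_re_trace_iff _ _

/-- **Equality condition in the multi-parameter Braunstein–Caves inequality.**
The classical Fisher information matrix of a POVM equals the SLD quantum information
matrix iff the POVM elements satisfy the Sarovar–Milburn-type condition
`M_m^{1/2} λ^j ρ^{1/2} = ξ_m^j M_m^{1/2} ρ^{1/2}` for some reals `ξ_m^j`. -/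
theorem braunstein_caves_equality {d p : ℕ} {Ω : Type} [Fintype Ω]
    (ρ : Matrix (Fin d) (Fin d) ℂ) (hρ : ρ.PosSemidef) (hρtr : ρ.trace = 1)
    (D lam : Fin p → Matrix (Fin d) (Fin d) ℂ)
    (hD : ∀ j, (D j).IsHermitian) (hlam : ∀ j, (lam j).IsHermitian)
    (hSLD : ∀ j, D j = (1 / 2 : ℂ) • (ρ * lam j + lam j * ρ))
    (M : Ω → Matrix (Fin d) (Fin d) ℂ)
    (hM : ∀ m, (M m).PosSemidef) (hMsum : ∑ m, M m = 1)
    (F H : Fin p → Fin p → ℝ)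
    (hF : ∀ j k, F j k = ∑ m, if (ρ * M m).trace ≠ 0 then
        ((D j * M m).trace.re * (D k * M m).trace.re) / ((ρ * M m).trace.re) else 0)
    (hH : ∀ j k, H j k = ((lam j * ρ * lam k).trace).re) :
    (∀ j k, F j k = H j k) ↔
      ∃ ξ : Ω → Fin p → ℝ, ∀ m j,
        (hM m).sqrt * lam j * hρ.sqrt = (ξ m j : ℂ) • ((hM m).sqrt * hρ.sqrt) :=
  braunstein_caves_equality_general ρ hρ D lam hlam hSLD M hM hMsum F H hF hH
end
end

section
/- The SLD quantum information is bounded by the Sarovar–Milburn bound (Theorem): In the spectral-family setup, C_Υ(θ) − H(θ) = 8 Σ over pairs (j,k) with p_j(θ) > 0 and p_k(θ) > 0 of (p_j(θ) p_k(θ)/(p_j(θ)+p_k(θ))) |⟨w_j'(θ), w_k(θ)⟩|². In particular H(θ) ≤ C_Υ(θ), with equality if and only if ⟨w_j'(θ), w_k(θ)⟩ = 0 for all j,k with p_j(θ) > 0 and p_k(θ) > 0. -/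
open scoped BigOperators

noncomputable section

/-- The Hermitian inner product on `Fin d → ℂ`, conjugate-linear in the first argument. -/
def inn {d : ℕ} (x y : Fin d → ℂ) : ℂ := ∑ i, (starRingEnd ℂ) (x i) * y i

/-! Differentiating orthonormality makes `‖⟨w_j', w_k⟩‖` symmetric in `j, k`; the rest is the
pairwise identity `(a + b) - (a - b)² / (a + b) = 4ab / (a + b)`, summed over `j < k`, together
with `a = 2 · a² / (a + a)` on the diagonal. -/

lemma inn_conj {d : ℕ} (x y : Fin d → ℂ) : starRingEnd ℂ (inn x y) = inn y x := by
  simp only [inn, map_sum, map_mul, Complex.conj_conj]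
  exact Finset.sum_congr rfl fun i _ => mul_comm _ _

lemma HasDerivAt.inn {d : ℕ} {f g : ℝ → Fin d → ℂ} {f' g' : Fin d → ℂ} {θ : ℝ}
    (hf : HasDerivAt f f' θ) (hg : HasDerivAt g g' θ) :
    HasDerivAt (fun t => inn (f t) (g t)) (inn f' (g θ) + inn (f θ) g') θ := by
  simpa only [_root_.inn, starRingEnd_apply, ← Finset.sum_add_distrib] using
    HasDerivAt.fun_sum fun i (_ : i ∈ Finset.univ) =>
      (hasDerivAt_pi.mp hf i).star.fun_mul (hasDerivAt_pi.mp hg i)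

lemma norm_inn_deriv_comm_of_inn_const {d : ℕ} {f g : ℝ → Fin d → ℂ} {f' g' : Fin d → ℂ}
    {θ : ℝ} {c : ℂ} (hf : HasDerivAt f f' θ) (hg : HasDerivAt g g' θ)
    (hc : ∀ t, inn (f t) (g t) = c) :
    ‖inn g' (f θ)‖ = ‖inn f' (g θ)‖ := by
  have hzero : inn f' (g θ) + inn (f θ) g' = 0 :=
    (hf.inn hg).unique (by simpa only [hc] using hasDerivAt_const θ c)
  rw [← inn_conj (f θ), Complex.norm_conj, eq_neg_of_add_eq_zero_right hzero, norm_neg]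

lemma add_sub_sq_div_add_eq (a b y : ℝ) (ha : 0 ≤ a) (hb : 0 ≤ b) :
    ((if 0 < a + b then (a + b) * y else 0)
      - if 0 < a + b then (a - b) ^ 2 / (a + b) * y else 0)
      = 4 * if 0 < a ∧ 0 < b then a * b / (a + b) * y else 0 := by
  by_cases hab : 0 < a + b
  · have hsq : (a + b) - (a - b) ^ 2 / (a + b) = 4 * (a * b / (a + b)) := by
      field_simp; ring
    by_cases hpos : 0 < a ∧ 0 < b
    · simp only [hab, hpos, and_self, if_true]
      linear_combination y * hsq
    · have hprod : a * b = 0 := by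
        rcases not_and_or.mp hpos with h | h
        · simp [le_antisymm (not_lt.mp h) ha]
        · simp [le_antisymm (not_lt.mp h) hb]
      simp only [hab, hpos, if_true, if_false, hprod, zero_div, mul_zero] at hsq ⊢
      linear_combination y * hsq
  · have ha0 : ¬ 0 < a := fun h => hab (by linarith)
    simp [hab, ha0]

lemma weighted_term_nonneg {a b y : ℝ} (ha : 0 ≤ a) (hb : 0 ≤ b) (hy : 0 ≤ y) :
    0 ≤ if 0 < a ∧ 0 < b then a * b / (a + b) * y else 0 := by
  split_ifs
  · exact mul_nonneg (div_nonneg (mul_nonneg ha hb) (add_nonneg ha hb)) hy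
  · exact le_rfl

lemma self_mul_eq_two_mul_self_mul_self_div (a y : ℝ) :
    (if 0 < a then a * y else 0) = 2 * if 0 < a ∧ 0 < a then a * a / (a + a) * y else 0 := by
  by_cases ha : 0 < a
  · simp only [ha, and_self, if_true]
    field_simp
    ring
  · simp [ha]

section WeightedSums

variable {ι : Type*} [Fintype ι]

lemma sum_sum_eq_two_nsmul_sum_sum_lt_add_sum_diag [LinearOrder ι] {M : Type*} [AddCommMonoid M]
    (T : ι → ι → M) (hT : ∀ j k, T j k = T k j) :
    ∑ j, ∑ k, T j k = 2 • (∑ j, ∑ k, if j < k then T j k else 0) + ∑ k, T k k := by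
  have htrichotomy : ∀ j k, T j k = ((if j < k then T j k else 0)
      + (if k < j then T k j else 0)) + (if j = k then T j k else 0) := by
    intro j k
    rcases lt_trichotomy j k with h | rfl | h
    · simp [h, h.not_gt, h.ne]
    · simp
    · simp [h, h.not_gt, h.ne', hT j k]
  rw [Finset.sum_congr rfl fun j _ => Finset.sum_congr rfl fun k _ => htrichotomy j k]
  simp only [Finset.sum_add_distrib, Finset.sum_ite_eq, Finset.mem_univ, if_true, two_nsmul]
  rw [Finset.sum_comm (f := fun j k => if k < j then T k j else 0)]

variable (p : ι → ℝ) (x : ι → ι → ℝ)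

/-- The difference `C_Υ − H` for weights `p` and squared overlaps `x`. -/
lemma sarovarMilburn_sub_sld_eq [LinearOrder ι] (hp : ∀ k, 0 ≤ p k)
    (hx : ∀ j k, x j k = x k j) :
    4 * (∑ j, ∑ k, if j < k ∧ 0 < p j + p k then (p j + p k) * x j k else 0)
      + 4 * (∑ k, if 0 < p k then p k * x k k else 0)
      - 4 * (∑ j, ∑ k, if j < k ∧ 0 < p j + p k then
          (p j - p k) ^ 2 / (p j + p k) * x j k else 0)
      = 8 * ∑ j, ∑ k, if 0 < p j ∧ 0 < p k then p j * p k / (p j + p k) * x j k else 0 := by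
  set T : ι → ι → ℝ := fun j k =>
    if 0 < p j ∧ 0 < p k then p j * p k / (p j + p k) * x j k else 0 with hTdef
  have hT : ∀ j k, T j k = T k j := by
    intro j k
    simp only [hTdef, and_comm, add_comm (p j), mul_comm (p j), hx j k]
  have hoff : (∑ j, ∑ k, if j < k ∧ 0 < p j + p k then (p j + p k) * x j k else 0)
      - (∑ j, ∑ k, if j < k ∧ 0 < p j + p k then (p j - p k) ^ 2 / (p j + p k) * x j k else 0)
      = 4 * ∑ j, ∑ k, if j < k then T j k else 0 := by
    simp only [← Finset.sum_sub_distrib, Finset.mul_sum]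
    refine Finset.sum_congr rfl fun j _ => Finset.sum_congr rfl fun k _ => ?_
    by_cases hjk : j < k
    · simpa only [hjk, true_and, if_true] using add_sub_sq_div_add_eq _ _ _ (hp j) (hp k)
    · simp [hjk]
  have hdiag : (∑ k, if 0 < p k then p k * x k k else 0) = 2 * ∑ k, T k k := by
    rw [Finset.mul_sum]
    exact Finset.sum_congr rfl fun k _ => self_mul_eq_two_mul_self_mul_self_div _ _
  rw [sum_sum_eq_two_nsmul_sum_sum_lt_add_sum_diag T hT, two_nsmul]
  linear_combination 4 * hoff + 4 * hdiag

lemma sum_sum_weighted_eq_zero_iff (hp : ∀ k, 0 ≤ p k) (hx : ∀ j k, 0 ≤ x j k) :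
    (∑ j, ∑ k, if 0 < p j ∧ 0 < p k then p j * p k / (p j + p k) * x j k else 0) = 0
      ↔ ∀ j k, 0 < p j → 0 < p k → x j k = 0 := by
  have hterm j k := weighted_term_nonneg (hp j) (hp k) (hx j k)
  simp only [Finset.sum_eq_zero_iff_of_nonneg fun j _ => Finset.sum_nonneg fun k _ => hterm j k,
    Finset.sum_eq_zero_iff_of_nonneg fun k _ => hterm _ k, Finset.mem_univ, true_implies]
  refine forall₂_congr fun j k => ?_
  by_cases hpos : 0 < p j ∧ 0 < p k
  · simp [hpos, (div_pos (mul_pos hpos.1 hpos.2) (add_pos hpos.1 hpos.2)).ne']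
  · simp only [hpos, if_false, true_iff]
    exact fun hj hk => absurd ⟨hj, hk⟩ hpos

end WeightedSums

theorem sld_le_sarovar_milburn_general {d : ℕ}
    (p : Fin d → ℝ → ℝ) (w : Fin d → ℝ → (Fin d → ℂ))
    (p' : Fin d → ℝ → ℝ) (w' : Fin d → ℝ → (Fin d → ℂ))
    (horth : ∀ θ (j k : Fin d), inn (w j θ) (w k θ) = if j = k then 1 else 0)
    (hpnn : ∀ (k : Fin d) θ, 0 ≤ p k θ)
    (hw' : ∀ (k : Fin d) θ, HasDerivAt (w k) (w' k θ) θ)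
    (C H : ℝ → ℝ)
    (hC : ∀ θ, C θ = (∑ k, if 0 < p k θ then (p' k θ) ^ 2 / p k θ else 0)
        + 4 * ∑ j, ∑ k, (if j < k ∧ 0 < p j θ + p k θ then
            (p j θ + p k θ) * ‖inn (w' j θ) (w k θ)‖ ^ 2 else 0)
        + 4 * ∑ k, (if 0 < p k θ then
            p k θ * ‖inn (w' k θ) (w k θ)‖ ^ 2 else 0))
    (hH : ∀ θ, H θ = (∑ k, if 0 < p k θ then (p' k θ) ^ 2 / p k θ else 0)
        + 4 * ∑ j, ∑ k, (if j < k ∧ 0 < p j θ + p k θ then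
            (p j θ - p k θ) ^ 2 / (p j θ + p k θ) *
              ‖inn (w' j θ) (w k θ)‖ ^ 2 else 0)) :
    ∀ θ : ℝ,
      (C θ - H θ = 8 * ∑ j, ∑ k, (if 0 < p j θ ∧ 0 < p k θ then
          p j θ * p k θ / (p j θ + p k θ) *
            ‖inn (w' j θ) (w k θ)‖ ^ 2 else 0)) ∧
      H θ ≤ C θ ∧
      (H θ = C θ ↔ ∀ j k : Fin d, 0 < p j θ → 0 < p k θ → inn (w' j θ) (w k θ) = 0) := by
  intro θ
  set x : Fin d → Fin d → ℝ := fun j k => ‖inn (w' j θ) (w k θ)‖ ^ 2 with hxdef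
  have hx : ∀ j k, 0 ≤ x j k := fun j k => by positivity
  have hsymm : ∀ j k, x j k = x k j := fun j k => by
    simp only [hxdef, norm_inn_deriv_comm_of_inn_const (hw' j θ) (hw' k θ) (horth · j k)]
  have hgap : C θ - H θ = 8 * ∑ j, ∑ k, (if 0 < p j θ ∧ 0 < p k θ then
      p j θ * p k θ / (p j θ + p k θ) * x j k else 0) := by
    rw [hC, hH]
    linear_combination sarovarMilburn_sub_sld_eq (p · θ) x (hpnn · θ) hsymm
  have hgap_nonneg : 0 ≤ ∑ j, ∑ k, (if 0 < p j θ ∧ 0 < p k θ then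
      p j θ * p k θ / (p j θ + p k θ) * x j k else 0) :=
    Finset.sum_nonneg fun j _ => Finset.sum_nonneg fun k _ =>
      weighted_term_nonneg (hpnn j θ) (hpnn k θ) (hx j k)
  refine ⟨hgap, by linarith, ?_⟩
  rw [eq_comm, ← sub_eq_zero, hgap, mul_eq_zero, or_iff_right (by norm_num),
    sum_sum_weighted_eq_zero_iff (p · θ) x (hpnn · θ) hx]
  simp only [hxdef, sq_eq_zero_iff, norm_eq_zero]

/-- **The SLD quantum information is bounded by the Sarovar–Milburn bound.**
`C_Υ(θ) − H(θ)` equals the displayed nonnegative sum; in particular `H(θ) ≤ C_Υ(θ)`,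
with equality iff `⟨w_j'(θ), w_k(θ)⟩ = 0` whenever `p_j(θ) > 0` and `p_k(θ) > 0`. -/
theorem sld_le_sarovar_milburn {d : ℕ} (hd : 1 ≤ d)
    (p : Fin d → ℝ → ℝ) (w : Fin d → ℝ → (Fin d → ℂ))
    (p' : Fin d → ℝ → ℝ) (w' : Fin d → ℝ → (Fin d → ℂ))
    (horth : ∀ θ (j k : Fin d), inn (w j θ) (w k θ) = if j = k then 1 else 0)
    (hpnn : ∀ (k : Fin d) θ, 0 ≤ p k θ) (hpsum : ∀ θ, ∑ k, p k θ = 1)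
    (hp' : ∀ (k : Fin d) θ, HasDerivAt (p k) (p' k θ) θ)
    (hw' : ∀ (k : Fin d) θ, HasDerivAt (w k) (w' k θ) θ)
    (hdich : ∀ k : Fin d, (∀ θ, 0 < p k θ) ∨ (∀ θ, p k θ = 0))
    (C H : ℝ → ℝ)
    (hC : ∀ θ, C θ = (∑ k, if 0 < p k θ then (p' k θ) ^ 2 / p k θ else 0)
        + 4 * ∑ j, ∑ k, (if j < k ∧ 0 < p j θ + p k θ then
            (p j θ + p k θ) * ‖inn (w' j θ) (w k θ)‖ ^ 2 else 0)
        + 4 * ∑ k, (if 0 < p k θ then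
            p k θ * ‖inn (w' k θ) (w k θ)‖ ^ 2 else 0))
    (hH : ∀ θ, H θ = (∑ k, if 0 < p k θ then (p' k θ) ^ 2 / p k θ else 0)
        + 4 * ∑ j, ∑ k, (if j < k ∧ 0 < p j θ + p k θ then
            (p j θ - p k θ) ^ 2 / (p j θ + p k θ) *
              ‖inn (w' j θ) (w k θ)‖ ^ 2 else 0)) :
    ∀ θ : ℝ,
      (C θ - H θ = 8 * ∑ j, ∑ k, (if 0 < p j θ ∧ 0 < p k θ then
          p j θ * p k θ / (p j θ + p k θ) *
            ‖inn (w' j θ) (w k θ)‖ ^ 2 else 0)) ∧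
      H θ ≤ C θ ∧
      (H θ = C θ ↔ ∀ j k : Fin d, 0 < p j θ → 0 < p k θ → inn (w' j θ) (w k θ) = 0) :=
  sld_le_sarovar_milburn_general p w p' w' horth hpnn hw' C H hC hH
end
end

section
/- Trace of the SLD quantum information for commuting dependent unitary channels (Proposition): In the commuting-channels setup, for each m ∈ {1,…,d−1} the quantity (H_θ)_{mm} := 4(⟨∂_m ψ_θ, ∂_m ψ_θ⟩ − |⟨∂_m ψ_θ, ψ_θ⟩|²) equals (4/d)·g_m'(θ_m)². Consequently Σ_{m=1}^{d−1} (H_θ)_{mm} = (4/d) Σ_{m=1}^{d−1} ( Σ_{j=1}^n f_j'(θ_m) )². -/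
/-!
The generator `Σ_k g(θ_k) t_k` is diagonal in the basis `w`, with eigenvalue
`φ_i(θ) = Σ_k g(θ_k) c_{ki}` on `w_i`, so `ψ_θ = d^{-1/2} Σ_i e^{i φ_i(θ)} w_i` and
`∂_m ψ_θ = d^{-1/2} Σ_i e^{i φ_i(θ)} (i g'(θ_m) c_{mi}) w_i`. By orthonormality,
`⟨∂_m ψ_θ, ∂_m ψ_θ⟩ = g'(θ_m)² Σ_i c_{mi}² / d = g'(θ_m)² / d`, while
`⟨∂_m ψ_θ, ψ_θ⟩ = -i g'(θ_m) Σ_i c_{mi} / d = 0` because the `t_m` are traceless.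
-/

open scoped BigOperators

noncomputable section

open Complex Matrix Finset

theorem Matrix.exp_mulVec_of_mulVec_eq_smul {n : Type*} [Fintype n] [DecidableEq n]
    {A : Matrix n n ℂ} {v : n → ℂ} {μ : ℂ} (h : A *ᵥ v = μ • v) :
    NormedSpace.exp A *ᵥ v = Complex.exp μ • v := by
  let _ : NormedRing (Matrix n n ℂ) := Matrix.linftyOpNormedRing
  let _ : NormedAlgebra ℂ (Matrix n n ℂ) := Matrix.linftyOpNormedAlgebra
  have hpow : ∀ k : ℕ, A ^ k *ᵥ v = μ ^ k • v := by
    intro k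
    induction k with
    | zero => simp
    | succ k ih => rw [pow_succ', ← mulVec_mulVec, ih, mulVec_smul, h, smul_smul, ← pow_succ]
  have hA := (NormedSpace.exp_series_hasSum_exp' (𝕂 := ℂ) A).map (mulVec.addMonoidHomLeft v)
    (continuous_id.matrix_mulVec continuous_const)
  have hμ := (NormedSpace.exp_series_hasSum_exp' (𝕂 := ℂ) μ).smul_const v
  rw [Complex.exp_eq_exp_ℂ]
  refine hA.unique ?_
  convert hμ using 2 with k
  simp [mulVec.addMonoidHomLeft, smul_mulVec, hpow, smul_smul]

lemma inn_eq_star_dotProduct {d : ℕ} (x y : Fin d → ℂ) : inn x y = star x ⬝ᵥ y := rfl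

section OrthonormalFamily

variable {d : ℕ} {w : Fin d → Fin d → ℂ}

lemma inn_sum_smul_sum_smul (horth : ∀ i j, inn (w i) (w j) = if i = j then 1 else 0)
    (a b : Fin d → ℂ) :
    inn (∑ i, a i • w i) (∑ j, b j • w j) = ∑ i, star (a i) * b i := by
  rw [inn_eq_star_dotProduct]
  simp only [star_sum, star_smul, sum_dotProduct, dotProduct_sum,
    smul_dotProduct, dotProduct_smul, ← inn_eq_star_dotProduct, horth, smul_eq_mul, mul_ite,
    mul_one, mul_zero, sum_ite_eq', mem_univ, if_true]
  exact sum_congr rfl fun i _ => mul_comm _ _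

lemma sum_smul_vecMulVec_mulVec (horth : ∀ i j, inn (w i) (w j) = if i = j then 1 else 0)
    (b : Fin d → ℂ) (j : Fin d) :
    (∑ i, b i • vecMulVec (w i) (star (w i))) *ᵥ w j = b j • w j := by
  simp only [sum_mulVec, smul_mulVec, vecMulVec_mulVec, op_smul_eq_smul,
    ← inn_eq_star_dotProduct, horth, ite_smul, one_smul, zero_smul, smul_ite, smul_zero,
    sum_ite_eq', mem_univ, if_true]

lemma exp_sum_smul_vecMulVec_mulVec (horth : ∀ i j, inn (w i) (w j) = if i = j then 1 else 0)
    (b a : Fin d → ℂ) :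
    NormedSpace.exp (∑ i, b i • vecMulVec (w i) (star (w i))) *ᵥ ∑ j, a j • w j
      = ∑ j, (a j * Complex.exp (b j)) • w j := by
  simp only [mulVec_sum, mulVec_smul,
    exp_mulVec_of_mulVec_eq_smul (sum_smul_vecMulVec_mulVec horth b _), smul_smul]

lemma inn_phaseDeriv_self (horth : ∀ i j, inn (w i) (w j) = if i = j then 1 else 0)
    (r : ℂ) (φ x : Fin d → ℝ) :
    inn (∑ i, (r * exp (φ i * I) * (x i * I)) • w i) (∑ i, (r * exp (φ i * I) * (x i * I)) • w i)
      = ((‖r‖ ^ 2 * ∑ i, x i ^ 2 : ℝ) : ℂ) := by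
  rw [inn_sum_smul_sum_smul horth, ofReal_mul, ofReal_sum, mul_sum]
  refine sum_congr rfl fun i _ => ?_
  rw [← starRingEnd_apply, conj_mul']
  simp [norm_exp_ofReal_mul_I, mul_pow, ← ofReal_pow, sq_abs]

lemma inn_phaseDeriv_phase (horth : ∀ i j, inn (w i) (w j) = if i = j then 1 else 0)
    (r : ℂ) (φ x : Fin d → ℝ) :
    inn (∑ i, (r * exp (φ i * I) * (x i * I)) • w i) (∑ i, (r * exp (φ i * I)) • w i)
      = -((‖r‖ ^ 2 * ∑ i, x i : ℝ) : ℂ) * I := by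
  rw [inn_sum_smul_sum_smul horth, ofReal_mul, ofReal_sum, mul_sum, neg_mul, sum_mul,
    ← sum_neg_distrib]
  refine sum_congr rfl fun i _ => ?_
  have hphase := conj_mul' (r * exp (φ i * I))
  rw [norm_mul, norm_exp_ofReal_mul_I, mul_one] at hphase
  rw [star_mul', ← starRingEnd_apply, mul_right_comm, hphase, star_mul', ← starRingEnd_apply,
    ← starRingEnd_apply, conj_ofReal, conj_I]
  push_cast
  ring

lemma exp_smul_sum_smul_sum_smul_vecMulVec_mulVec {κ : Type*} [Fintype κ]
    (horth : ∀ i j, inn (w i) (w j) = if i = j then 1 else 0)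
    (a : κ → ℝ) (c : κ → Fin d → ℝ) (r : ℂ) :
    NormedSpace.exp (I • ∑ k, (a k : ℂ) • ∑ i, (c k i : ℂ) • vecMulVec (w i) (star (w i)))
        *ᵥ (r • ∑ j, w j)
      = ∑ i, (r * exp ((∑ k, a k * c k i : ℝ) * I)) • w i := by
  have hdiag : I • ∑ k, (a k : ℂ) • ∑ i, (c k i : ℂ) • vecMulVec (w i) (star (w i))
      = ∑ i, ((∑ k, a k * c k i : ℝ) * I) • vecMulVec (w i) (star (w i)) := by
    simp only [smul_sum, smul_smul, ofReal_sum, ofReal_mul]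
    rw [sum_comm]
    refine sum_congr rfl fun i _ => ?_
    rw [← sum_smul, sum_mul]
    simp only [mul_comm]
  rw [hdiag, smul_sum, exp_sum_smul_vecMulVec_mulVec horth]

end OrthonormalFamily

lemma hasDerivAt_sum_smul_phase {ι E : Type*} [Fintype ι] [NormedAddCommGroup E]
    [NormedSpace ℂ E] (w : ι → E) (r : ℂ) {φ : ℝ → ι → ℝ} {x : ι → ℝ} {t : ℝ}
    (hφ : ∀ i, HasDerivAt (fun s => φ s i) (x i) t) :
    HasDerivAt (fun s => ∑ i, (r * exp (φ s i * I)) • w i)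
      (∑ i, (r * exp (φ t i * I) * (x i * I)) • w i) t := by
  refine HasDerivAt.fun_sum fun i _ => ?_
  convert ((((hφ i).ofReal_comp.mul_const I).cexp).const_mul r).smul_const (w i) using 2
  ring

lemma hasDerivAt_sum_apply_update {ι : Type*} [Fintype ι] [DecidableEq ι] {h : ι → ℝ → ℝ}
    {θ : ι → ℝ} {m : ι} {h' : ℝ} (hm : HasDerivAt (h m) h' (θ m)) :
    HasDerivAt (fun t => ∑ k, h k (Function.update θ m t k)) h' (θ m) := by
  have hsplit : (fun t => ∑ k, h k (Function.update θ m t k))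
      = fun t => h m t + ∑ k ∈ univ \ {m}, h k (θ k) := by
    funext t
    simp only [Function.apply_update h, sum_update_of_mem (mem_univ m)]
  rw [hsplit]
  exact hm.add_const _

lemma hasDerivAt_update_sum_smul_phase {ι κ E : Type*} [Fintype ι] [Fintype κ] [DecidableEq κ]
    [NormedAddCommGroup E] [NormedSpace ℂ E] (w : ι → E) (r : ℂ) (c : κ → ι → ℝ)
    {g : ℝ → ℝ} {g' : ℝ} {θ : κ → ℝ} {m : κ} (hg : HasDerivAt g g' (θ m)) :
    HasDerivAt
      (fun t => ∑ i, (r * exp ((∑ k, g (Function.update θ m t k) * c k i : ℝ) * I)) • w i)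
      (∑ i, (r * exp ((∑ k, g (θ k) * c k i : ℝ) * I) * ((g' * c m i : ℝ) * I)) • w i) (θ m) := by
  have hline := hasDerivAt_sum_smul_phase w r
    (φ := fun t i => ∑ k, g (Function.update θ m t k) * c k i) (t := θ m) fun i =>
      hasDerivAt_sum_apply_update (h := fun k y => g y * c k i) (hg.mul_const (c m i))
  rwa [Function.update_eq_self] at hline

theorem commuting_channels_sld_trace_general {d n : ℕ}
    (w : Fin d → Fin d → ℂ)
    (horth : ∀ i j : Fin d, inn (w i) (w j) = if i = j then 1 else 0)
    (c : Fin (d - 1) → Fin d → ℝ)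
    (hc0 : ∀ m, ∑ i, c m i = 0)
    (hcorth : ∀ m m', ∑ i, c m i * c m' i = if m = m' then 1 else 0)
    (f f' : Fin n → ℝ → ℝ)
    (hf : ∀ (j : Fin n) (s : ℝ), HasDerivAt (f j) (f' j s) s)
    (ψ : (Fin (d - 1) → ℝ) → (Fin d → ℂ))
    (hψ : ∀ θ, ψ θ = (NormedSpace.exp
        (Complex.I • ∑ k, ((∑ j, f j (θ k) : ℝ) : ℂ) •
          (∑ i, (c k i : ℂ) • Matrix.vecMulVec (w i) (star (w i))))).mulVec
        (((1 / Real.sqrt d : ℝ) : ℂ) • ∑ k, w k))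
    (Dψ : Fin (d - 1) → (Fin (d - 1) → ℝ) → (Fin d → ℂ))
    (hDψ : ∀ m θ, HasDerivAt (fun t => ψ (Function.update θ m t)) (Dψ m θ) (θ m)) :
    (∀ (θ : Fin (d - 1) → ℝ) (m : Fin (d - 1)),
      (4 : ℂ) * (inn (Dψ m θ) (Dψ m θ) - ‖inn (Dψ m θ) (ψ θ)‖ ^ 2)
        = (((4 / d) * (∑ j, f' j (θ m)) ^ 2 : ℝ) : ℂ)) ∧
    (∀ θ : Fin (d - 1) → ℝ,
      ∑ m, (4 : ℂ) * (inn (Dψ m θ) (Dψ m θ) - ‖inn (Dψ m θ) (ψ θ)‖ ^ 2)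
        = (((4 / d) * ∑ m, (∑ j, f' j (θ m)) ^ 2 : ℝ) : ℂ)) := by
  set g : ℝ → ℝ := fun s => ∑ j, f j s
  set g' : ℝ → ℝ := fun s => ∑ j, f' j s
  set r : ℂ := ((1 / Real.sqrt d : ℝ) : ℂ)
  have hψ_eq : ∀ θ, ψ θ = ∑ i, (r * exp ((∑ k, g (θ k) * c k i : ℝ) * I)) • w i := fun θ => by
    rw [hψ θ, exp_smul_sum_smul_sum_smul_vecMulVec_mulVec horth]
  have hDψ_eq : ∀ m θ, Dψ m θ
      = ∑ i, (r * exp ((∑ k, g (θ k) * c k i : ℝ) * I) * ((g' (θ m) * c m i : ℝ) * I)) • w i :=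
    fun m θ => (hDψ m θ).unique <| by
      simpa only [hψ_eq] using hasDerivAt_update_sum_smul_phase w r c
        (HasDerivAt.fun_sum fun j _ => hf j (θ m))
  have hr : ‖r‖ ^ 2 = 1 / d := by
    simp [r, Real.sq_sqrt (Nat.cast_nonneg d)]
  have entry : ∀ θ m, (4 : ℂ) * (inn (Dψ m θ) (Dψ m θ) - ‖inn (Dψ m θ) (ψ θ)‖ ^ 2)
      = (((4 / d) * (g' (θ m)) ^ 2 : ℝ) : ℂ) := by
    intro θ m
    have hnorm : ∑ i, (g' (θ m) * c m i) ^ 2 = g' (θ m) ^ 2 := by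
      simp only [mul_pow, ← mul_sum, sq (c m _), hcorth m m, if_true, mul_one]
    rw [hDψ_eq, hψ_eq, inn_phaseDeriv_self horth, inn_phaseDeriv_phase horth, hr, ← mul_sum,
      hc0, hnorm, mul_zero, mul_zero, ofReal_zero, neg_zero, zero_mul, norm_zero]
    push_cast
    ring
  refine ⟨entry, fun θ => ?_⟩
  simp only [entry, ← ofReal_sum, mul_sum]
  rfl

/-- **Trace of the SLD quantum information for commuting dependent unitary channels.**
Each diagonal entry `(H_θ)_{mm} = 4(⟨∂_m ψ_θ, ∂_m ψ_θ⟩ − |⟨∂_m ψ_θ, ψ_θ⟩|²)` equals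
`(4/d)·g'(θ_m)²` with `g' = Σ_j f_j'`, and hence the trace equals
`(4/d) Σ_m (Σ_j f_j'(θ_m))²`. -/
theorem commuting_channels_sld_trace {d n : ℕ} (hd : 2 ≤ d)
    (w : Fin d → Fin d → ℂ)
    (horth : ∀ i j : Fin d, inn (w i) (w j) = if i = j then 1 else 0)
    (c : Fin (d - 1) → Fin d → ℝ)
    (hc0 : ∀ m, ∑ i, c m i = 0)
    (hcorth : ∀ m m', ∑ i, c m i * c m' i = if m = m' then 1 else 0)
    (f f' : Fin n → ℝ → ℝ)
    (hf : ∀ (j : Fin n) (s : ℝ), HasDerivAt (f j) (f' j s) s)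
    (ψ : (Fin (d - 1) → ℝ) → (Fin d → ℂ))
    (hψ : ∀ θ, ψ θ = (NormedSpace.exp
        (Complex.I • ∑ k, ((∑ j, f j (θ k) : ℝ) : ℂ) •
          (∑ i, (c k i : ℂ) • Matrix.vecMulVec (w i) (star (w i))))).mulVec
        (((1 / Real.sqrt d : ℝ) : ℂ) • ∑ k, w k))
    (Dψ : Fin (d - 1) → (Fin (d - 1) → ℝ) → (Fin d → ℂ))
    (hDψ : ∀ m θ, HasDerivAt (fun t => ψ (Function.update θ m t)) (Dψ m θ) (θ m)) :
    (∀ (θ : Fin (d - 1) → ℝ) (m : Fin (d - 1)),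
      (4 : ℂ) * (inn (Dψ m θ) (Dψ m θ) - ‖inn (Dψ m θ) (ψ θ)‖ ^ 2)
        = (((4 / d) * (∑ j, f' j (θ m)) ^ 2 : ℝ) : ℂ)) ∧
    (∀ θ : Fin (d - 1) → ℝ,
      ∑ m, (4 : ℂ) * (inn (Dψ m θ) (Dψ m θ) - ‖inn (Dψ m θ) (ψ θ)‖ ^ 2)
        = (((4 / d) * ∑ m, (∑ j, f' j (θ m)) ^ 2 : ℝ) : ℂ)) :=
  commuting_channels_sld_trace_general w horth c hc0 hcorth f f' hf ψ hψ Dψ hDψ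
end
end

section
/- Explicit multi-parameter SLDs and the SLD quantum information matrix (Proposition): In the multi-parameter spectral-family setup, define for each k ∈ {1,…,p} the matrix λ̃^k_θ = Σ_{i: p_i>0} (p_i^{(k)}/p_i) |w_i(θ)⟩⟨w_i(θ)| + 2 Σ_{i≠j, p_i+p_j>0} ((p_i−p_j)/(p_i+p_j)) ⟨w_i^{(k)}(θ), w_j(θ)⟩ |w_i(θ)⟩⟨w_j(θ)|. Then each λ̃^k_θ is Hermitian, satisfies ∂ρ_θ/∂θ^k = (1/2)(ρ_θ λ̃^k_θ + λ̃^k_θ ρ_θ), and for all k,l one has Re tr( λ̃^k_θ ρ_θ λ̃^l_θ ) = (H(θ))_{kl}. -/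
open scoped BigOperators

noncomputable section

/-!
Write every matrix in the orthonormal eigenbasis `w` of `ρ` as `ofCoeffs w C = ∑ C i j |w i⟩⟨w j|`;
products, adjoints and traces are then computed on the coefficient matrices, and `ρ` has the
coefficients `diagonal p`. Differentiating `⟨w i, w j⟩ = δ i j` shows that `A i j = ⟨∂w i, w j⟩`
is skew-Hermitian. This makes the SLD coefficients Hermitian, and it gives
`∂ρ = ofCoeffs w (diagonal ∂p + diagonal p * A - A * diagonal p)`, which is the anticommutator
`½(ρλ + λρ)` because `½ (p i + p j) · 2 (p i - p j) / (p i + p j) = p i - p j`. In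
`tr(λᵏ ρ λˡ) = ∑ i j, λᵏ i j * p j * λˡ j i` the terms for `(i, j)` and `(j, i)` are complex
conjugate up to the weights `p j`, `p i`, so their real parts add up to the
`(p i - p j)² / (p i + p j)` term of the information matrix.
-/

open Matrix

section Frame

variable {ι n : Type*} [Fintype ι]

def frame (w : ι → n → ℂ) : Matrix n ι ℂ := Matrix.of fun a i => w i a

-- the operator `∑ i j, C i j |w i⟩⟨w j|`
def ofCoeffs (w : ι → n → ℂ) (C : Matrix ι ι ℂ) : Matrix n n ℂ := frame w * C * (frame w)ᴴ

lemma ofCoeffs_apply (w : ι → n → ℂ) (C : Matrix ι ι ℂ) (a b : n) :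
    ofCoeffs w C a b = ∑ i, ∑ j, C i j * (w i a * star (w j b)) := by
  simp only [ofCoeffs, frame, mul_apply, conjTranspose_apply, of_apply, Finset.sum_mul]
  rw [Finset.sum_comm]
  exact Finset.sum_congr rfl fun i _ => Finset.sum_congr rfl fun j _ => by ring

lemma sum_sum_smul_vecMulVec (w : ι → n → ℂ) (C : Matrix ι ι ℂ) :
    ∑ i, ∑ j, C i j • vecMulVec (w i) (star (w j)) = ofCoeffs w C := by
  ext a b
  simp [ofCoeffs_apply, Matrix.sum_apply, vecMulVec_apply]

lemma sum_smul_vecMulVec [DecidableEq ι] (w : ι → n → ℂ) (c : ι → ℂ) :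
    ∑ i, c i • vecMulVec (w i) (star (w i)) = ofCoeffs w (diagonal c) := by
  simp [← sum_sum_smul_vecMulVec, diagonal_apply, ite_smul]

lemma ofCoeffs_diagonal_apply [DecidableEq ι] (w : ι → n → ℂ) (c : ι → ℂ) (a b : n) :
    ofCoeffs w (diagonal c) a b = ∑ i, c i * (w i a * star (w i b)) := by
  simp [ofCoeffs_apply, diagonal_apply]

lemma hasDerivAt_ofCoeffs_diagonal_apply [DecidableEq ι] {p : ι → ℝ → ℝ} {w : ι → ℝ → n → ℂ}
    {p' : ι → ℝ} {w' : ι → n → ℂ} {t : ℝ} (hp : ∀ i, HasDerivAt (p i) (p' i) t)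
    (hw : ∀ i, HasDerivAt (w i) (w' i) t) (a b : n) :
    HasDerivAt (fun s => ofCoeffs (w · s) (diagonal fun i => (p i s : ℂ)) a b)
      ((frame w' * diagonal (fun i => (p i t : ℂ)) * (frame (w · t))ᴴ
        + ofCoeffs (w · t) (diagonal fun i => (p' i : ℂ))
        + frame (w · t) * diagonal (fun i => (p i t : ℂ)) * (frame w')ᴴ) a b) t := by
  simp only [ofCoeffs_diagonal_apply, Matrix.add_apply]
  refine (HasDerivAt.fun_sum fun i _ => (hp i).ofReal_comp.fun_mul
    ((hasDerivAt_pi.mp (hw i) a).fun_mul (hasDerivAt_pi.mp (hw i) b).star)).congr_deriv ?_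
  simp only [frame, mul_apply, diagonal_apply, of_apply, conjTranspose_apply, mul_ite, mul_zero,
    Finset.sum_ite_eq', Finset.mem_univ, if_true, ← Finset.sum_add_distrib]
  exact Finset.sum_congr rfl fun i _ => by ring

lemma ofCoeffs_add (w : ι → n → ℂ) (C D : Matrix ι ι ℂ) :
    ofCoeffs w (C + D) = ofCoeffs w C + ofCoeffs w D := by
  simp [ofCoeffs, Matrix.mul_add, Matrix.add_mul]

lemma ofCoeffs_smul (w : ι → n → ℂ) (c : ℂ) (C : Matrix ι ι ℂ) :
    ofCoeffs w (c • C) = c • ofCoeffs w C := by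
  simp [ofCoeffs]

lemma isHermitian_ofCoeffs {C : Matrix ι ι ℂ} (hC : C.IsHermitian) (w : ι → n → ℂ) :
    (ofCoeffs w C).IsHermitian :=
  isHermitian_mul_mul_conjTranspose _ hC

end Frame

section InnMatrix

variable {ι : Type*} {d : ℕ}

def innMatrix (v w : ι → Fin d → ℂ) : Matrix ι ι ℂ := Matrix.of fun i j => inn (v i) (w j)

@[simp] lemma innMatrix_apply (v w : ι → Fin d → ℂ) (i j : ι) :
    innMatrix v w i j = inn (v i) (w j) := rfl

lemma star_inn (x y : Fin d → ℂ) : star (inn x y) = inn y x := by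
  simp [inn, mul_comm]

lemma conjTranspose_innMatrix (v w : ι → Fin d → ℂ) : (innMatrix v w)ᴴ = innMatrix w v := by
  ext i j
  simp [star_inn]

lemma conjTranspose_frame_mul_frame (v w : ι → Fin d → ℂ) :
    (frame v)ᴴ * frame w = innMatrix v w := by
  ext i j
  simp [frame, inn, mul_apply]

lemma hasDerivAt_inn {v w : ℝ → Fin d → ℂ} {v' w' : Fin d → ℂ} {t : ℝ}
    (hv : HasDerivAt v v' t) (hw : HasDerivAt w w' t) :
    HasDerivAt (fun s => inn (v s) (w s)) (inn v' (w t) + inn (v t) w') t := by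
  simp only [inn, starRingEnd_apply, ← Finset.sum_add_distrib]
  exact HasDerivAt.fun_sum fun a _ =>
    ((hasDerivAt_pi.mp hv a).star.mul (hasDerivAt_pi.mp hw a))

lemma conjTranspose_innMatrix_deriv_eq_neg [DecidableEq ι] {w : ι → ℝ → Fin d → ℂ}
    {w' : ι → Fin d → ℂ} {t : ℝ} (horth : ∀ s, innMatrix (w · s) (w · s) = 1)
    (hw : ∀ i, HasDerivAt (w i) (w' i) t) :
    (innMatrix w' (w · t))ᴴ = -innMatrix w' (w · t) := by
  ext i j
  have hconst : (fun s => inn (w i s) (w j s)) = fun _ => (1 : Matrix ι ι ℂ) i j :=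
    funext fun s => by rw [← horth s, innMatrix_apply]
  have h := (hasDerivAt_inn (hw i) (hw j)).unique (hconst ▸ hasDerivAt_const t _)
  rw [conjTranspose_innMatrix, neg_apply, innMatrix_apply, innMatrix_apply]
  exact eq_neg_of_add_eq_zero_right h

variable [Fintype ι] [DecidableEq ι]

lemma trace_ofCoeffs {w : ι → Fin d → ℂ} (hw : innMatrix w w = 1) (C : Matrix ι ι ℂ) :
    (ofCoeffs w C).trace = C.trace := by
  rw [ofCoeffs, trace_mul_cycle, conjTranspose_frame_mul_frame, hw, Matrix.one_mul]

lemma ofCoeffs_mul_ofCoeffs {w : ι → Fin d → ℂ} (hw : innMatrix w w = 1) (C D : Matrix ι ι ℂ) :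
    ofCoeffs w C * ofCoeffs w D = ofCoeffs w (C * D) := by
  simp only [ofCoeffs, Matrix.mul_assoc]
  rw [← Matrix.mul_assoc (frame w)ᴴ, conjTranspose_frame_mul_frame, hw, Matrix.one_mul]

end InnMatrix

section Orthonormal

variable {d : ℕ}

lemma frame_mul_conjTranspose_frame {w : Fin d → Fin d → ℂ} (hw : innMatrix w w = 1) :
    frame w * (frame w)ᴴ = 1 :=
  mul_eq_one_comm.mp (by rw [conjTranspose_frame_mul_frame, hw])

lemma frame_eq_frame_mul_innMatrix {w : Fin d → Fin d → ℂ} (hw : innMatrix w w = 1)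
    (v : Fin d → Fin d → ℂ) : frame v = frame w * innMatrix w v := by
  rw [← conjTranspose_frame_mul_frame, ← Matrix.mul_assoc, frame_mul_conjTranspose_frame hw,
    Matrix.one_mul]

lemma frame_mul_mul_conjTranspose_add_eq_ofCoeffs {w w' : Fin d → Fin d → ℂ}
    (hw : innMatrix w w = 1) (hA : (innMatrix w' w)ᴴ = -innMatrix w' w) (P : Matrix (Fin d) (Fin d) ℂ) :
    frame w' * P * (frame w)ᴴ + frame w * P * (frame w')ᴴ
      = ofCoeffs w (P * innMatrix w' w - innMatrix w' w * P) := by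
  have hframe : frame w' = -(frame w * innMatrix w' w) := by
    rw [frame_eq_frame_mul_innMatrix hw w', ← conjTranspose_innMatrix, hA, Matrix.mul_neg]
  rw [hframe, ofCoeffs]
  simp only [conjTranspose_neg, conjTranspose_mul, hA, Matrix.mul_sub, Matrix.sub_mul,
    Matrix.mul_assoc, Matrix.neg_mul, neg_neg]
  abel

lemma hasDerivAt_ofCoeffs_diagonal_apply_of_orthonormal {p : Fin d → ℝ → ℝ}
    {w : Fin d → ℝ → Fin d → ℂ} {p' : Fin d → ℝ} {w' : Fin d → Fin d → ℂ} {t : ℝ}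
    (horth : ∀ s, innMatrix (w · s) (w · s) = 1) (hp : ∀ i, HasDerivAt (p i) (p' i) t)
    (hw : ∀ i, HasDerivAt (w i) (w' i) t) (a b : Fin d) :
    HasDerivAt (fun s => ofCoeffs (w · s) (diagonal fun i => (p i s : ℂ)) a b)
      (ofCoeffs (w · t) (diagonal (fun i => (p' i : ℂ))
        + diagonal (fun i => (p i t : ℂ)) * innMatrix w' (w · t)
        - innMatrix w' (w · t) * diagonal (fun i => (p i t : ℂ))) a b) t := by
  convert hasDerivAt_ofCoeffs_diagonal_apply hp hw a b using 2
  rw [add_right_comm, frame_mul_mul_conjTranspose_add_eq_ofCoeffs (horth t)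
    (conjTranspose_innMatrix_deriv_eq_neg horth hw), add_sub_assoc, ofCoeffs_add, add_comm]

end Orthonormal

section SLDCoeff

variable {ι : Type*}

lemma apply_eq_neg_star_apply {A : Matrix ι ι ℂ} (hA : Aᴴ = -A) (i j : ι) :
    A j i = -star (A i j) := by
  rw [← neg_neg (A j i), ← Matrix.neg_apply, ← hA, conjTranspose_apply]

variable [DecidableEq ι]

-- the coefficients of `λ̃^k` in the basis `w`, for `pd = ∂_k p` and `A i j = ⟨∂_k w i, w j⟩`
def sldCoeff (p pd : ι → ℝ) (A : Matrix ι ι ℂ) : Matrix ι ι ℂ :=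
  diagonal (fun i => if 0 < p i then ((pd i / p i : ℝ) : ℂ) else 0) +
    (2 : ℂ) • Matrix.of fun i j => if i ≠ j ∧ 0 < p i + p j then
      (((p i - p j) / (p i + p j) : ℝ) : ℂ) * A i j else 0

variable {p : ι → ℝ} (pd : ι → ℝ) (A : Matrix ι ι ℂ)

lemma sldCoeff_apply (hp : ∀ i, 0 ≤ p i) (i j : ι) :
    sldCoeff p pd A i j = if i = j then ((pd i / p i : ℝ) : ℂ)
      else 2 * (((p i - p j) / (p i + p j) : ℝ) : ℂ) * A i j := by
  -- for `p ≥ 0` the guards only exclude zero denominators, where division gives `0` anyway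
  by_cases hij : i = j
  · subst hij
    by_cases hpi : 0 < p i
    · simp [sldCoeff, hpi]
    · simp [sldCoeff, le_antisymm (not_lt.mp hpi) (hp i)]
  · by_cases hs : 0 < p i + p j
    · simp [sldCoeff, hij, hs, mul_assoc]
    · have hs0 : p i + p j = 0 := le_antisymm (not_lt.mp hs) (add_nonneg (hp i) (hp j))
      simp [sldCoeff, hij, hs0]

lemma sldCoeff_isHermitian (hp : ∀ i, 0 ≤ p i) (hA : Aᴴ = -A) :
    (sldCoeff p pd A).IsHermitian := by
  ext i j
  rw [conjTranspose_apply, sldCoeff_apply pd A hp, sldCoeff_apply pd A hp]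
  by_cases hij : i = j
  · subst hij
    simp [Complex.conj_ofReal]
  · rw [if_neg (Ne.symm hij), if_neg hij, apply_eq_neg_star_apply hA i j, add_comm (p j),
      ← neg_sub (p i), neg_div]
    simp [Complex.conj_ofReal]

variable [Fintype ι]

lemma sldCoeff_anticommutator (hp : ∀ i, 0 ≤ p i) (hpd : ∀ i, p i = 0 → pd i = 0) :
    (1 / 2 : ℂ) • (diagonal (fun i => (p i : ℂ)) * sldCoeff p pd A
        + sldCoeff p pd A * diagonal (fun i => (p i : ℂ)))
      = diagonal (fun i => (pd i : ℂ))
        + (diagonal (fun i => (p i : ℂ)) * A - A * diagonal (fun i => (p i : ℂ))) := by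
  ext i j
  simp only [Matrix.smul_apply, Matrix.add_apply, Matrix.sub_apply, diagonal_mul, mul_diagonal,
    sldCoeff_apply pd A hp, diagonal_apply, smul_eq_mul]
  by_cases hij : i = j
  · subst hij
    rcases eq_or_ne (p i) 0 with hpi | hpi
    · simp [hpi, hpd i hpi]
    · have hpi' : (p i : ℂ) ≠ 0 := by exact_mod_cast hpi
      simp only [if_true, sub_self]
      push_cast
      field_simp
      ring
  · simp only [if_neg hij, zero_add]
    rcases eq_or_ne (p i + p j) 0 with hs | hs
    · have hpi : p i = 0 := by linarith [hp i, hp j]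
      have hpj : p j = 0 := by linarith [hp i, hp j]
      simp [hpi, hpj]
    · have hs' : (p i : ℂ) + p j ≠ 0 := by exact_mod_cast hs
      push_cast
      field_simp

end SLDCoeff

lemma Finset.sum_sum_eq_sum_add_sum_lt {ι M : Type*} [Fintype ι] [LinearOrder ι]
    [AddCommMonoid M] (F : ι → ι → M) :
    ∑ i, ∑ j, F i j = ∑ i, F i i + ∑ i, ∑ j, if i < j then F i j + F j i else 0 := by
  have hsplit : ∀ i j, F i j = (if i = j then F i j else 0)
      + ((if i < j then F i j else 0) + if j < i then F i j else 0) := by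
    intro i j
    rcases lt_trichotomy i j with h | rfl | h
    · simp [h, h.ne, not_lt_of_gt h]
    · simp
    · simp [h, h.ne', not_lt_of_gt h]
  rw [Finset.sum_congr rfl fun i _ => Finset.sum_congr rfl fun j _ => hsplit i j]
  simp only [Finset.sum_add_distrib, Finset.sum_ite_eq, Finset.mem_univ, if_true]
  rw [Finset.sum_comm (f := fun i j => if j < i then F i j else 0)]
  simp only [← Finset.sum_add_distrib, ite_add_ite, add_zero]

section SLDTrace

variable {ι : Type*} [DecidableEq ι] {p : ι → ℝ} (pd pd' : ι → ℝ) {A B : Matrix ι ι ℂ}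

lemma re_sldCoeff_mul_sldCoeff_add_swap (hp : ∀ i, 0 ≤ p i) (hA : Aᴴ = -A) (hB : Bᴴ = -B)
    {i j : ι} (hij : i ≠ j) :
    (sldCoeff p pd A i j * p j * sldCoeff p pd' B j i
        + sldCoeff p pd A j i * p i * sldCoeff p pd' B i j).re
      = 4 * (if 0 < p i + p j then
          (((p i - p j) ^ 2 / (p i + p j) : ℝ) : ℂ) * A i j * star (B i j) else 0).re := by
  have hrhs : (if 0 < p i + p j then
        (((p i - p j) ^ 2 / (p i + p j) : ℝ) : ℂ) * A i j * star (B i j) else 0)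
      = (((p i - p j) ^ 2 / (p i + p j) : ℝ) : ℂ) * (A i j * star (B i j)) := by
    split_ifs with hs
    · rw [mul_assoc]
    · have hs0 : p i + p j = 0 := le_antisymm (not_lt.mp hs) (add_nonneg (hp i) (hp j))
      simp [hs0]
  have hr : (p j - p i) / (p j + p i) = -((p i - p j) / (p i + p j)) := by
    rw [add_comm, ← neg_sub, neg_div]
  rw [hrhs, Complex.re_ofReal_mul]
  simp only [sldCoeff_apply _ _ hp, if_neg hij, if_neg hij.symm, apply_eq_neg_star_apply hA i j,
    apply_eq_neg_star_apply hB i j, hr]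
  set r := (p i - p j) / (p i + p j)
  set z := A i j * star (B i j)
  calc _ = (((4 * r ^ 2 * p j : ℝ) : ℂ) * z + ((4 * r ^ 2 * p i : ℝ) : ℂ) * star z).re := by
        simp only [z, star_mul', star_star, Complex.ofReal_mul, Complex.ofReal_pow,
          Complex.ofReal_neg, Complex.ofReal_ofNat]
        ring_nf
    _ = 4 * (r ^ 2 * (p i + p j)) * z.re := by
        rw [Complex.add_re, Complex.re_ofReal_mul, Complex.re_ofReal_mul, Complex.star_def,
          Complex.conj_re]
        ring
    _ = _ := by
        rcases eq_or_ne (p i + p j) 0 with hs | hs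
        · simp [r, hs]
        · simp only [r]
          field_simp

variable [Fintype ι] [LinearOrder ι]

lemma re_trace_sldCoeff_mul_diagonal_mul_sldCoeff (hp : ∀ i, 0 ≤ p i) (hA : Aᴴ = -A)
    (hB : Bᴴ = -B) :
    (sldCoeff p pd A * diagonal (fun i => (p i : ℂ)) * sldCoeff p pd' B).trace.re =
      (∑ i, if 0 < p i then pd i * pd' i / p i else 0) +
      4 * (∑ i, ∑ j, if i < j ∧ 0 < p i + p j then
        (((p i - p j) ^ 2 / (p i + p j) : ℝ) : ℂ) * A i j * star (B i j) else 0).re := by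
  have htrace : (sldCoeff p pd A * diagonal (fun i => (p i : ℂ)) * sldCoeff p pd' B).trace
      = ∑ i, ∑ j, sldCoeff p pd A i j * p j * sldCoeff p pd' B j i := by
    simp [trace, mul_apply, diagonal_apply]
  rw [htrace, Finset.sum_sum_eq_sum_add_sum_lt, Complex.add_re, Complex.re_sum, Complex.re_sum,
    Complex.re_sum, Finset.mul_sum]
  congr 1
  · refine Finset.sum_congr rfl fun i _ => ?_
    have hdiag : ((pd i / p i : ℝ) : ℂ) * p i * ((pd' i / p i : ℝ) : ℂ)
        = ((pd i * pd' i / p i : ℝ) : ℂ) := by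
      rcases eq_or_ne (p i) 0 with hpi | hpi
      · simp [hpi]
      · push_cast
        field_simp
    rw [sldCoeff_apply _ _ hp, sldCoeff_apply _ _ hp, if_pos rfl, if_pos rfl, hdiag,
      Complex.ofReal_re]
    split_ifs with hpi
    · rfl
    · simp [le_antisymm (not_lt.mp hpi) (hp i)]
  · refine Finset.sum_congr rfl fun i _ => ?_
    simp only [Complex.re_sum, Finset.mul_sum]
    refine Finset.sum_congr rfl fun j _ => ?_
    by_cases hij : i < j
    · simp only [hij, if_true, true_and]
      exact re_sldCoeff_mul_sldCoeff_add_swap pd pd' hp hA hB hij.ne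
    · simp [hij]

end SLDTrace

lemma ofCoeffs_sldCoeff_innMatrix {ι : Type*} [Fintype ι] [DecidableEq ι] {d : ℕ}
    (p pd : ι → ℝ) (v w : ι → Fin d → ℂ) :
    ofCoeffs w (sldCoeff p pd (innMatrix v w))
      = (∑ i, if 0 < p i then
          ((pd i / p i : ℝ) : ℂ) • vecMulVec (w i) (star (w i)) else 0)
        + (2 : ℂ) • ∑ i, ∑ j, (if i ≠ j ∧ 0 < p i + p j then
          (((p i - p j) / (p i + p j) : ℝ) : ℂ) •
            inn (v i) (w j) • vecMulVec (w i) (star (w j)) else 0) := by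
  rw [sldCoeff, ofCoeffs_add, ofCoeffs_smul, ← sum_smul_vecMulVec, ← sum_sum_smul_vecMulVec]
  congr 2
  · ext1 i
    split_ifs <;> simp
  · exact Finset.sum_congr rfl fun i _ => Finset.sum_congr rfl fun j _ => by
      rw [of_apply]
      split_ifs <;> simp [smul_smul]

theorem multiparam_explicit_sld_general {d n : ℕ}
    (p : Fin d → (Fin n → ℝ) → ℝ) (w : Fin d → (Fin n → ℝ) → (Fin d → ℂ))
    (pd : Fin d → Fin n → (Fin n → ℝ) → ℝ)
    (wd : Fin d → Fin n → (Fin n → ℝ) → (Fin d → ℂ))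
    (horth : ∀ θ (i j : Fin d), inn (w i θ) (w j θ) = if i = j then 1 else 0)
    (hpnn : ∀ (i : Fin d) θ, 0 ≤ p i θ)
    (hpd : ∀ (i : Fin d) (k : Fin n) θ,
      HasDerivAt (fun t => p i (Function.update θ k t)) (pd i k θ) (θ k))
    (hwd : ∀ (i : Fin d) (k : Fin n) θ,
      HasDerivAt (fun t => w i (Function.update θ k t)) (wd i k θ) (θ k))
    (hdich : ∀ i : Fin d, (∀ θ, 0 < p i θ) ∨ (∀ θ, p i θ = 0))
    (ρ : (Fin n → ℝ) → Matrix (Fin d) (Fin d) ℂ)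
    (hρ : ∀ θ, ρ θ = ∑ i, (p i θ : ℂ) • Matrix.vecMulVec (w i θ) (star (w i θ)))
    (lamt : Fin n → (Fin n → ℝ) → Matrix (Fin d) (Fin d) ℂ)
    (hlamt : ∀ (k : Fin n) θ, lamt k θ =
      (∑ i, if 0 < p i θ then
          ((pd i k θ / p i θ : ℝ) : ℂ) • Matrix.vecMulVec (w i θ) (star (w i θ)) else 0)
      + (2 : ℂ) • ∑ i, ∑ j, (if i ≠ j ∧ 0 < p i θ + p j θ then
          (((p i θ - p j θ) / (p i θ + p j θ) : ℝ) : ℂ) •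
            inn (wd i k θ) (w j θ) • Matrix.vecMulVec (w i θ) (star (w j θ)) else 0)) :
    ∀ θ : Fin n → ℝ,
      (∀ k : Fin n, (lamt k θ).IsHermitian) ∧
      (∀ (k : Fin n) (a b : Fin d),
        HasDerivAt (fun t => ρ (Function.update θ k t) a b)
          (((1 / 2 : ℂ) • (ρ θ * lamt k θ + lamt k θ * ρ θ)) a b) (θ k)) ∧
      (∀ k l : Fin n, ((lamt k θ * ρ θ * lamt l θ).trace).re =
        (∑ i, if 0 < p i θ then pd i k θ * pd i l θ / p i θ else 0)
        + 4 * (∑ i, ∑ j, if i < j ∧ 0 < p i θ + p j θ then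
            (((p i θ - p j θ) ^ 2 / (p i θ + p j θ) : ℝ) : ℂ) *
              inn (wd i k θ) (w j θ) * inn (w j θ) (wd i l θ) else 0).re) := by
  intro θ
  have horth' : ∀ θ, innMatrix (w · θ) (w · θ) = 1 := fun θ => Matrix.ext (horth θ)
  have hρ' : ∀ θ, ρ θ = ofCoeffs (w · θ) (diagonal fun i => (p i θ : ℂ)) := fun θ => by
    rw [hρ, sum_smul_vecMulVec]
  have hlamt' : ∀ k, lamt k θ =
      ofCoeffs (w · θ) (sldCoeff (p · θ) (pd · k θ) (innMatrix (wd · k θ) (w · θ))) := fun k => by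
    rw [hlamt, ofCoeffs_sldCoeff_innMatrix]
  have hskew : ∀ k, (innMatrix (wd · k θ) (w · θ))ᴴ = -innMatrix (wd · k θ) (w · θ) := fun k => by
    simpa only [Function.update_eq_self] using
      conjTranspose_innMatrix_deriv_eq_neg (w := fun i t => w i (Function.update θ k t))
        (fun _ => horth' _) (fun i => hwd i k θ)
  have hpd0 : ∀ i k, p i θ = 0 → pd i k θ = 0 := fun i k h0 =>
    (hdich i).elim (fun hpos => absurd h0 (hpos θ).ne') fun hzero =>
      (hpd i k θ).unique (by simpa only [hzero] using hasDerivAt_const (θ k) (0 : ℝ))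
  refine ⟨fun k => ?_, fun k a b => ?_, fun k l => ?_⟩
  · rw [hlamt' k]
    exact isHermitian_ofCoeffs (sldCoeff_isHermitian _ _ (hpnn · θ) (hskew k)) _
  · have hderiv := hasDerivAt_ofCoeffs_diagonal_apply_of_orthonormal
      (p := fun i t => p i (Function.update θ k t)) (w := fun i t => w i (Function.update θ k t))
      (fun _ => horth' _) (fun i => hpd i k θ) (fun i => hwd i k θ) a b
    simp only [Function.update_eq_self] at hderiv
    simp only [hρ', hlamt', ofCoeffs_mul_ofCoeffs (horth' θ), ← ofCoeffs_add, ← ofCoeffs_smul,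
      sldCoeff_anticommutator _ _ (hpnn · θ) (fun i => hpd0 i k), ← add_sub_assoc]
    exact hderiv
  · rw [hlamt' k, hρ', hlamt' l, ofCoeffs_mul_ofCoeffs (horth' θ),
      ofCoeffs_mul_ofCoeffs (horth' θ), trace_ofCoeffs (horth' θ),
      re_trace_sldCoeff_mul_diagonal_mul_sldCoeff _ _ (hpnn · θ) (hskew k) (hskew l)]
    simp only [innMatrix_apply, star_inn]

/-- **Explicit multi-parameter SLDs and the SLD quantum information matrix.**
Each `λ̃^k_θ` is Hermitian, satisfies the SLD equation
`∂ρ_θ/∂θ^k = (1/2)(ρ_θ λ̃^k_θ + λ̃^k_θ ρ_θ)` (entrywise), and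
`Re tr(λ̃^k_θ ρ_θ λ̃^l_θ) = (H(θ))_{kl}`. -/
theorem multiparam_explicit_sld {d n : ℕ} (hd : 1 ≤ d) (hn : 1 ≤ n)
    (p : Fin d → (Fin n → ℝ) → ℝ) (w : Fin d → (Fin n → ℝ) → (Fin d → ℂ))
    (pd : Fin d → Fin n → (Fin n → ℝ) → ℝ)
    (wd : Fin d → Fin n → (Fin n → ℝ) → (Fin d → ℂ))
    (horth : ∀ θ (i j : Fin d), inn (w i θ) (w j θ) = if i = j then 1 else 0)
    (hpnn : ∀ (i : Fin d) θ, 0 ≤ p i θ) (hpsum : ∀ θ, ∑ i, p i θ = 1)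
    (hpd : ∀ (i : Fin d) (k : Fin n) θ,
      HasDerivAt (fun t => p i (Function.update θ k t)) (pd i k θ) (θ k))
    (hwd : ∀ (i : Fin d) (k : Fin n) θ,
      HasDerivAt (fun t => w i (Function.update θ k t)) (wd i k θ) (θ k))
    (hpdC : ∀ i : Fin d, Continuous fun θ k => pd i k θ)
    (hwdC : ∀ i : Fin d, Continuous fun θ k => wd i k θ)
    (hdich : ∀ i : Fin d, (∀ θ, 0 < p i θ) ∨ (∀ θ, p i θ = 0))
    (ρ : (Fin n → ℝ) → Matrix (Fin d) (Fin d) ℂ)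
    (hρ : ∀ θ, ρ θ = ∑ i, (p i θ : ℂ) • Matrix.vecMulVec (w i θ) (star (w i θ)))
    (lamt : Fin n → (Fin n → ℝ) → Matrix (Fin d) (Fin d) ℂ)
    (hlamt : ∀ (k : Fin n) θ, lamt k θ =
      (∑ i, if 0 < p i θ then
          ((pd i k θ / p i θ : ℝ) : ℂ) • Matrix.vecMulVec (w i θ) (star (w i θ)) else 0)
      + (2 : ℂ) • ∑ i, ∑ j, (if i ≠ j ∧ 0 < p i θ + p j θ then
          (((p i θ - p j θ) / (p i θ + p j θ) : ℝ) : ℂ) •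
            inn (wd i k θ) (w j θ) • Matrix.vecMulVec (w i θ) (star (w j θ)) else 0)) :
    ∀ θ : Fin n → ℝ,
      (∀ k : Fin n, (lamt k θ).IsHermitian) ∧
      (∀ (k : Fin n) (a b : Fin d),
        HasDerivAt (fun t => ρ (Function.update θ k t) a b)
          (((1 / 2 : ℂ) • (ρ θ * lamt k θ + lamt k θ * ρ θ)) a b) (θ k)) ∧
      (∀ k l : Fin n, ((lamt k θ * ρ θ * lamt l θ).trace).re =
        (∑ i, if 0 < p i θ then pd i k θ * pd i l θ / p i θ else 0)
        + 4 * (∑ i, ∑ j, if i < j ∧ 0 < p i θ + p j θ then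
            (((p i θ - p j θ) ^ 2 / (p i θ + p j θ) : ℝ) : ℂ) *
              inn (wd i k θ) (w j θ) * inn (w j θ) (wd i l θ) else 0).re) :=
  multiparam_explicit_sld_general p w pd wd horth hpnn hpd hwd hdich ρ hρ lamt hlamt
end
end

section
/- Parameter-count bound for attainability of the SLD quantum information for pure states (Theorem): Let d ≥ 1 and let ψ, l_1,…,l_p ∈ ℂ^d with ‖ψ‖ = 1. Suppose that the p+1 vectors ψ, l_1,…,l_p are linearly independent over ℝ (viewing ℂ^d as a real vector space), that ⟨l_j, ψ⟩ = 0 for every j, and that ⟨l_j, l_k⟩ ∈ ℝ for all j,k. Then p ≤ d − 1. -/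
open scoped BigOperators

noncomputable section

/-!
Split a complex relation `∑ c j • l j = 0` as `x + I • y = 0` with `x`, `y` in the real span
of the `l j`. A real Gram matrix makes `⟪x, y⟫` real, whereas `x = -(I • y)` gives
`⟪x, y⟫ = I * ‖y‖²`; so `x = y = 0`, and real independence of the `l j` upgrades to complex
independence. The nonzero vector `ψ`, orthogonal to all `l j`, then extends them to `p + 1`
complex-independent vectors in `ℂ^d`.
-/

open scoped InnerProductSpace
open Complex

section

variable {E : Type*} [NormedAddCommGroup E] [InnerProductSpace ℂ E]

theorem im_inner_sum_smul_eq_zero {ι : Type*} [Fintype ι] {v : ι → E}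
    (hreal : ∀ j k, (⟪v j, v k⟫_ℂ).im = 0) (a b : ι → ℝ) :
    (⟪∑ j, a j • v j, ∑ k, b k • v k⟫_ℂ).im = 0 := by
  simp [← coe_smul, hreal]

theorem eq_zero_and_eq_zero_of_add_I_smul_eq_zero {x y : E} (h : x + I • y = 0)
    (him : (⟪x, y⟫_ℂ).im = 0) : x = 0 ∧ y = 0 := by
  have hx : x = -(I • y) := eq_neg_of_add_eq_zero_left h
  have hy : y = 0 := by
    have : (⟪x, y⟫_ℂ).im = ‖y‖ ^ 2 := by
      simp [hx, inner_neg_left, inner_smul_left, ← ofReal_pow]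
    simpa [this] using him
  simp [hx, hy]

theorem LinearIndependent.complex_of_im_inner_eq_zero {ι : Type*} [Fintype ι] {v : ι → E}
    (hv : LinearIndependent ℝ v) (hreal : ∀ j k, (⟪v j, v k⟫_ℂ).im = 0) :
    LinearIndependent ℂ v := by
  rw [Fintype.linearIndependent_iff] at hv ⊢
  intro c hc
  have hsplit : ∑ j, c j • v j = ∑ j, (c j).re • v j + I • ∑ j, (c j).im • v j := by
    simp only [Finset.smul_sum, ← Finset.sum_add_distrib, smul_smul, ← coe_smul, ← add_smul]
    congr! 2 with j
    rw [mul_comm, re_add_im]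
  obtain ⟨hre, him⟩ := eq_zero_and_eq_zero_of_add_I_smul_eq_zero (hsplit ▸ hc)
    (im_inner_sum_smul_eq_zero hreal _ _)
  exact fun j => Complex.ext (hv _ hre j) (hv _ him j)

end

theorem LinearIndependent.fin_cons_of_inner_eq_zero {𝕜 E : Type*} [RCLike 𝕜]
    [NormedAddCommGroup E] [InnerProductSpace 𝕜 E] {n : ℕ} {x : E} {v : Fin n → E}
    (hv : LinearIndependent 𝕜 v) (hx : x ≠ 0) (horth : ∀ j, ⟪v j, x⟫_𝕜 = 0) :
    LinearIndependent 𝕜 (Fin.cons x v : Fin (n + 1) → E) := by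
  refine linearIndependent_finCons.2 ⟨hv, fun hmem => hx ?_⟩
  have hspan : Submodule.span 𝕜 (Set.range v) ≤ (𝕜 ∙ x)ᗮ := by
    rw [Submodule.span_le]
    rintro _ ⟨j, rfl⟩
    exact Submodule.mem_orthogonal_singleton_iff_inner_left.2 (horth j)
  exact inner_self_eq_zero.1 (Submodule.mem_orthogonal_singleton_iff_inner_left.1 (hspan hmem))

theorem inn_eq_inner {d : ℕ} (x y : Fin d → ℂ) :
    inn x y = ⟪(WithLp.toLp 2 x : EuclideanSpace ℂ (Fin d)), WithLp.toLp 2 y⟫_ℂ := by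
  simp [inn, PiLp.inner_apply, mul_comm]

theorem pure_state_parameter_bound_general {d p : ℕ}
    (ψ : Fin d → ℂ) (l : Fin p → (Fin d → ℂ))
    (hR : LinearIndependent ℝ (Fin.cons ψ l : Fin (p + 1) → (Fin d → ℂ)))
    (horth : ∀ j, inn (l j) ψ = 0)
    (hreal : ∀ j k, (inn (l j) (l k)).im = 0) :
    p ≤ d - 1 := by
  have hRE : LinearIndependent ℝ (Fin.cons (WithLp.toLp 2 ψ) (WithLp.toLp 2 ∘ l) :
      Fin (p + 1) → EuclideanSpace ℂ (Fin d)) := by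
    rw [← Fin.comp_cons]
    exact hR.map' (WithLp.linearEquiv 2 ℝ (Fin d → ℂ)).symm.toLinearMap (LinearEquiv.ker _)
  have hl : LinearIndependent ℂ (WithLp.toLp 2 ∘ l : Fin p → EuclideanSpace ℂ (Fin d)) :=
    (linearIndependent_finCons.1 hRE).1.complex_of_im_inner_eq_zero
      (by simpa [inn_eq_inner] using hreal)
  have hC := hl.fin_cons_of_inner_eq_zero (hRE.ne_zero 0) (by simpa [inn_eq_inner] using horth)
  have hcard : p + 1 ≤ d := by simpa using hC.fintype_card_le_finrank
  omega

/-- **Parameter-count bound for attainability of the SLD quantum information for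
pure states.**  If `ψ, l_1, …, l_p` are `ℝ`-linearly independent, `⟨l_j, ψ⟩ = 0` for
all `j`, and all `⟨l_j, l_k⟩` are real, then `p ≤ d − 1`. -/
theorem pure_state_parameter_bound {d p : ℕ} (hd : 1 ≤ d)
    (ψ : Fin d → ℂ) (l : Fin p → (Fin d → ℂ))
    (hψ : inn ψ ψ = 1)
    (hR : LinearIndependent ℝ (Fin.cons ψ l : Fin (p + 1) → (Fin d → ℂ)))
    (horth : ∀ j, inn (l j) ψ = 0)
    (hreal : ∀ j k, (inn (l j) (l k)).im = 0) :
    p ≤ d - 1 :=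
  pure_state_parameter_bound_general ψ l hR horth hreal
end
end
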